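/- arXiv:1401.3181 — 6 statements merged into one kernel-verified Lean document; each statement's English description precedes it below -/
import Mathlib

section
/- Let S_1,…,S_r be subsets of {1,…,n} and let k_1,…,k_r be positive integers with k_1+⋯+k_r > N_U = (d_1−1)+⋯+(d_n−1). Set D = d_1⋯d_n. Then for Lebesgue-almost every tuple (B_1,…,B_r), where B_i is a k_i × D complex matrix (identifying the space of k_i × D complex matrices with ℝ^{2 k_i D} equipped with Lebesgue measure), the system (*) with D_i = ker B_i has no nonzero solution. -/
noncomputable section

open scoped BigOperators
open MeasureTheory

/-- The product vector `ψ₁ ⊗ ⋯ ⊗ ψₙ` in `H = ℂ^{d₁} ⊗ ⋯ ⊗ ℂ^{dₙ}`, realized as the space of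
complex-valued functions on `(Fin d₁) × ⋯ × (Fin dₙ)`. -/
def prodVec {n : ℕ} (d : Fin n → ℕ) (ψ : (j : Fin n) → Fin (d j) → ℂ) :
    ((j : Fin n) → Fin (d j)) → ℂ :=
  fun x => ∏ j, ψ j (x j)

/-- The partial conjugate `ψ^{Γ(S)}` of the product vector `ψ₁ ⊗ ⋯ ⊗ ψₙ`. -/
def partialConj {n : ℕ} (d : Fin n → ℕ) (S : Finset (Fin n))
    (ψ : (j : Fin n) → Fin (d j) → ℂ) : ((j : Fin n) → Fin (d j)) → ℂ :=
  prodVec d fun j => if j ∈ S then fun i => starRingEnd ℂ (ψ j i) else ψ j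

/-!
A nonzero product solution can be rescaled so that `ψ j (c j) = 1` for some multi-index `c`.
Given `c`, the normalised `ψ` (real dimension `2 N_U`) and the columns of the `B i` other than
`c` (real dimension `2 (∑ kᵢ) (D - 1)`), the kernel equations determine column `c`, because the
`c`-entry of every `ψ^{Γ(Sᵢ)}` is `1`. So the bad tuples lie in finitely many ranges of smooth
maps from spaces of dimension `2 N_U + 2 (∑ kᵢ)(D - 1) < 2 (∑ kᵢ) D`, and such ranges are null.
-/

open Module

theorem LinearMap.exists_surjective_of_finrank_le {K E F : Type*} [DivisionRing K]
    [AddCommGroup E] [Module K E] [FiniteDimensional K E] [AddCommGroup F] [Module K F]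
    [FiniteDimensional K F] (h : finrank K E ≤ finrank K F) :
    ∃ p : F →ₗ[K] E, Function.Surjective p := by
  obtain ⟨i, hi⟩ := finrank_le_iff_exists_linearMap.1 h
  obtain ⟨p, hp⟩ := i.exists_leftInverse_of_injective (LinearMap.ker_eq_bot.2 hi)
  exact ⟨p, fun x => ⟨i x, LinearMap.congr_fun hp x⟩⟩

/-- Composing with a surjection `F → E` turns this into Sard's lemma in fixed dimension, since
the differential then vanishes on the nontrivial kernel of the surjection. -/
theorem MeasureTheory.addHaar_range_eq_zero_of_finrank_lt {E F : Type*} [NormedAddCommGroup E]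
    [NormedSpace ℝ E] [FiniteDimensional ℝ E] [NormedAddCommGroup F] [NormedSpace ℝ F]
    [FiniteDimensional ℝ F] [MeasurableSpace F] [BorelSpace F] (μ : Measure F)
    [μ.IsAddHaarMeasure] {G : E → F} (hG : Differentiable ℝ G)
    (h : finrank ℝ E < finrank ℝ F) : μ (Set.range G) = 0 := by
  obtain ⟨p, hp⟩ := LinearMap.exists_surjective_of_finrank_le h.le
  let P : F →L[ℝ] E := p.toContinuousLinearMap
  have hker : LinearMap.ker p ≠ ⊥ := LinearMap.ker_ne_bot_of_finrank_lt h
  rw [← hp.range_comp G, ← Set.image_univ]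
  refine addHaar_image_eq_zero_of_det_fderivWithin_eq_zero μ
    (fun x _ => ((hG (P x)).hasFDerivAt.comp x P.hasFDerivAt).hasFDerivWithinAt) fun x _ => ?_
  rw [ContinuousLinearMap.det, LinearMap.det_eq_zero_iff_ker_ne_bot]
  exact fun h0 => hker (eq_bot_iff.2 (h0 ▸ LinearMap.ker_le_ker_comp p _))

section

variable {n : ℕ} {d : Fin n → ℕ}

theorem partialConj_mul_factors (S : Finset (Fin n)) (a : Fin n → ℂ)
    (ψ : (j : Fin n) → Fin (d j) → ℂ) :
    partialConj d S (fun j i => a j * ψ j i) =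
      (∏ j, if j ∈ S then starRingEnd ℂ (a j) else a j) • partialConj d S ψ := by
  funext x
  simp only [partialConj, prodVec, Pi.smul_apply, smul_eq_mul, ← Finset.prod_mul_distrib]
  refine Finset.prod_congr rfl fun j _ => ?_
  split_ifs <;> simp

theorem partialConj_apply_eq_one {S : Finset (Fin n)} {ψ : (j : Fin n) → Fin (d j) → ℂ}
    {c : (j : Fin n) → Fin (d j)} (hc : ∀ j, ψ j (c j) = 1) : partialConj d S ψ c = 1 := by
  unfold partialConj prodVec
  exact Finset.prod_eq_one fun j _ => by by_cases hj : j ∈ S <;> simp [hj, hc j]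

theorem Differentiable.partialConj {E : Type*} [NormedAddCommGroup E] [NormedSpace ℝ E]
    (S : Finset (Fin n)) {f : E → (j : Fin n) → Fin (d j) → ℂ} (hf : Differentiable ℝ f) :
    Differentiable ℝ fun p => partialConj d S (f p) := by
  have hf' : ∀ j i, Differentiable ℝ fun p => f p j i := fun j i =>
    differentiable_pi.1 (differentiable_pi.1 hf j) i
  refine differentiable_pi.2 fun x => ?_
  have hfactor : ∀ j, Differentiable ℝ fun p =>
      (if j ∈ S then fun i => starRingEnd ℂ (f p j i) else f p j) (x j) := by
    intro j; split_ifs <;> fun_prop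
  simp only [_root_.partialConj, prodVec]
  fun_prop

variable (c : (j : Fin n) → Fin (d j))

def normalizedFactors (t : (j : Fin n) → {i : Fin (d j) // i ≠ c j} → ℂ) :
    (j : Fin n) → Fin (d j) → ℂ :=
  fun j i => if h : i = c j then 1 else t j ⟨i, h⟩

theorem normalizedFactors_apply_self (t : (j : Fin n) → {i : Fin (d j) // i ≠ c j} → ℂ)
    (j : Fin n) : normalizedFactors c t j (c j) = 1 := dif_pos rfl

theorem differentiable_normalizedFactors :
    Differentiable ℝ (normalizedFactors c) := by
  refine differentiable_pi.2 fun j => differentiable_pi.2 fun i => ?_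
  unfold normalizedFactors
  split_ifs <;> fun_prop

theorem exists_normalizedFactors_solution {r : ℕ} {S : Fin r → Finset (Fin n)}
    {D : Fin r → Submodule ℂ (((j : Fin n) → Fin (d j)) → ℂ)}
    {ψ : (j : Fin n) → Fin (d j) → ℂ} (hψ : ∀ j, ψ j ≠ 0)
    (hD : ∀ i, partialConj d (S i) ψ ∈ D i) :
    ∃ c t, ∀ i, partialConj d (S i) (normalizedFactors c t) ∈ D i := by
  choose c hc using fun j => (Function.ne_iff.1 (hψ j) : ∃ i, ψ j i ≠ 0)
  refine ⟨c, fun j i => (ψ j (c j))⁻¹ * ψ j i, fun i => ?_⟩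
  have hnorm : normalizedFactors c (fun j i => (ψ j (c j))⁻¹ * ψ j i) =
      fun j i => (ψ j (c j))⁻¹ * ψ j i := by
    funext j i
    by_cases h : i = c j
    · subst h; simp [normalizedFactors, hc j]
    · simp [normalizedFactors, h]
  rw [hnorm, partialConj_mul_factors]
  exact Submodule.smul_mem _ _ (hD i)

variable {r : ℕ} (S : Fin r → Finset (Fin n)) (k : Fin r → ℕ)

abbrev FillColumnDomain :=
  ((j : Fin n) → {i : Fin (d j) // i ≠ c j} → ℂ) ×
    ((i : Fin r) → Fin (k i) → {x : (j : Fin n) → Fin (d j) // x ≠ c} → ℂ)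

def fillColumn (p : FillColumnDomain c k) :
    (i : Fin r) → Fin (k i) → ((j : Fin n) → Fin (d j)) → ℂ :=
  fun i row x =>
    if hx : x = c then
      -∑ y : {x // x ≠ c}, p.2 i row y * partialConj d (S i) (normalizedFactors c p.1) y
    else p.2 i row ⟨x, hx⟩

theorem differentiable_fillColumn : Differentiable ℝ (fillColumn c S k) := by
  have hψ : ∀ i y, Differentiable ℝ fun p : FillColumnDomain c k =>
      partialConj d (S i) (normalizedFactors c p.1) y := fun i =>
    differentiable_pi.1
      (((differentiable_normalizedFactors c).comp differentiable_fst).partialConj (S i))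
  refine differentiable_pi.2 fun i => differentiable_pi.2 fun row =>
    differentiable_pi.2 fun x => ?_
  unfold fillColumn
  split_ifs <;> fun_prop

theorem finrank_fillColumnDomain_lt (hNE : ∑ j, (d j - 1) < ∑ i, k i) :
    finrank ℝ (FillColumnDomain c k) <
      finrank ℝ ((i : Fin r) → Fin (k i) → ((j : Fin n) → Fin (d j)) → ℂ) := by
  have : Nonempty ((j : Fin n) → Fin (d j)) := ⟨c⟩
  obtain ⟨D, hD⟩ : ∃ D, Fintype.card ((j : Fin n) → Fin (d j)) = D + 1 :=
    Nat.exists_eq_succ_of_ne_zero Fintype.card_ne_zero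
  simp only [finrank_prod, finrank_pi_fintype, Complex.finrank_real_complex, Finset.sum_const,
    Finset.card_univ, smul_eq_mul, Fintype.card_fin, Fintype.card_subtype_compl,
    Fintype.card_unique, hD, Nat.add_sub_cancel, ← Finset.sum_mul]
  nlinarith

theorem fillColumn_restrict {B : (i : Fin r) → Fin (k i) → ((j : Fin n) → Fin (d j)) → ℂ}
    {t : (j : Fin n) → {i : Fin (d j) // i ≠ c j} → ℂ}
    (hB : ∀ i, partialConj d (S i) (normalizedFactors c t) ∈
      LinearMap.ker (Matrix.mulVecLin (Matrix.of (B i)))) :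
    fillColumn c S k (t, fun i row y => B i row y) = B := by
  funext i row x
  by_cases hx : x = c
  · subst hx
    have hrow := congrFun (LinearMap.mem_ker.1 (hB i)) row
    simp only [Matrix.mulVecLin_apply, Matrix.mulVec, dotProduct, Matrix.of_apply,
      Pi.zero_apply] at hrow
    rw [Fintype.sum_eq_add_sum_subtype_ne _ x,
      partialConj_apply_eq_one (normalizedFactors_apply_self x t), mul_one] at hrow
    simp only [fillColumn, ↓reduceDIte]
    exact (eq_neg_of_add_eq_zero_left hrow).symm
  · simp only [fillColumn, dif_neg hx]

end

theorem overdetermined_generic_no_solution_general {n r : ℕ} (d : Fin n → ℕ)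
    (S : Fin r → Finset (Fin n)) (k : Fin r → ℕ)
    (hNE : ∑ j, (d j - 1) < ∑ i, k i) :
    ∀ᵐ B : (i : Fin r) → Fin (k i) → ((j : Fin n) → Fin (d j)) → ℂ ∂volume,
      ¬ ∃ ψ : (j : Fin n) → Fin (d j) → ℂ, (∀ j, ψ j ≠ 0) ∧
        ∀ i, partialConj d (S i) ψ ∈ LinearMap.ker (Matrix.mulVecLin (Matrix.of (B i))) := by
  rw [ae_iff]
  simp only [not_not]
  refine measure_mono_null (t := ⋃ c, Set.range (fillColumn c S k)) ?_
    (measure_iUnion_null fun c => ?_)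
  · rintro B ⟨ψ, hψ, hker⟩
    obtain ⟨c, t, ht⟩ := exists_normalizedFactors_solution hψ hker
    exact Set.mem_iUnion.2 ⟨c, _, fillColumn_restrict c S k ht⟩
  · -- instance search does not unfold `volume` on nested pi types to `Measure.pi`
    have : ∀ i, (volume : Measure (Fin (k i) → ((j : Fin n) → Fin (d j)) → ℂ)).IsAddHaarMeasure :=
      fun i => Measure.pi.isAddHaarMeasure _
    have : (volume : Measure ((i : Fin r) → Fin (k i) → ((j : Fin n) → Fin (d j)) → ℂ)
      ).IsAddHaarMeasure := Measure.pi.isAddHaarMeasure _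
    exact addHaar_range_eq_zero_of_finrank_lt volume (differentiable_fillColumn c S k)
      (finrank_fillColumnDomain_lt c k hNE)

/-- Over-determined case: if `N_E = ∑ kᵢ > N_U = ∑ (dⱼ - 1)`, then for (Lebesgue-)almost every
tuple of matrices `(B₁, …, B_r)`, `Bᵢ` of size `kᵢ × (d₁⋯dₙ)`, the system of equations
`ψ^{Γ(Sᵢ)} ∈ ker Bᵢ` has no nonzero product-vector solution. -/
theorem overdetermined_generic_no_solution {n r : ℕ} (d : Fin n → ℕ) (hd : ∀ j, 0 < d j)
    (S : Fin r → Finset (Fin n)) (k : Fin r → ℕ)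
    (hNE : ∑ j, (d j - 1) < ∑ i, k i) :
    ∀ᵐ B : (i : Fin r) → Fin (k i) → ((j : Fin n) → Fin (d j)) → ℂ ∂volume,
      ¬ ∃ ψ : (j : Fin n) → Fin (d j) → ℂ, (∀ j, ψ j ≠ 0) ∧
        ∀ i, partialConj d (S i) ψ ∈ LinearMap.ker (Matrix.mulVecLin (Matrix.of (B i))) :=
  overdetermined_generic_no_solution_general d S k hNE
end
end

section
/- Let β_1, β_2 ∈ ℂ² ⊗ ℂ² be given by β_1 = e_0⊗e_0 + e_1⊗e_1 and β_2 = e_0⊗e_1 − e_1⊗e_0, where e_0, e_1 is the standard basis of ℂ². Then there exist no nonzero vectors ψ_1, ψ_2, ψ_3, ψ_4 ∈ ℂ² satisfying all four orthogonality conditions in ℂ²⊗ℂ²⊗ℂ²⊗ℂ² (with respect to the standard Hermitian inner product): ψ_1 ⊗ conj(ψ_2) ⊗ ψ_3 ⊗ conj(ψ_4) ⊥ β_1⊗β_1, ψ_1 ⊗ conj(ψ_2) ⊗ ψ_3 ⊗ ψ_4 ⊥ β_1⊗β_2, ψ_1 ⊗ ψ_2 ⊗ ψ_3 ⊗ conj(ψ_4)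 ⊥ β_2⊗β_1, and ψ_1 ⊗ ψ_2 ⊗ ψ_3 ⊗ ψ_4 ⊥ β_2⊗β_2. (Here conj denotes the entrywise complex conjugate, β_a⊗β_b ∈ (ℂ²)^{⊗4} is taken with the first factor β_a occupying tensor positions 1,2 and the second factor β_b positions 3,4, and (ℂ²)^{⊗4} is realized as the space of complex-valued functions on (Fin 2)^4 with (v_1⊗v_2⊗v_3⊗v_4)(i_1,i_2,i_3,i_4) = v_1(i_1)v_2(i_2)v_3(i_3)v_4(i_4).) -/
noncomputable section

open scoped BigOperators

/-- The standard basis vector `e₀` of `ℂ²`. -/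
def e0 : Fin 2 → ℂ := fun i => if i = 0 then 1 else 0

/-- The standard basis vector `e₁` of `ℂ²`. -/
def e1 : Fin 2 → ℂ := fun i => if i = 1 then 1 else 0

/-- `β₁ = e₀ ⊗ e₀ + e₁ ⊗ e₁ ∈ ℂ² ⊗ ℂ²`, as a function on `Fin 2 × Fin 2`. -/
def beta1 : Fin 2 × Fin 2 → ℂ := fun p => e0 p.1 * e0 p.2 + e1 p.1 * e1 p.2

/-- `β₂ = e₀ ⊗ e₁ - e₁ ⊗ e₀ ∈ ℂ² ⊗ ℂ²`, as a function on `Fin 2 × Fin 2`. -/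
def beta2 : Fin 2 × Fin 2 → ℂ := fun p => e0 p.1 * e1 p.2 - e1 p.1 * e0 p.2

/-- The entrywise complex conjugate of a vector in `ℂ²`. -/
def conj2 (v : Fin 2 → ℂ) : Fin 2 → ℂ := fun i => starRingEnd ℂ (v i)

/-- The tensor product `v₁ ⊗ v₂ ⊗ v₃ ⊗ v₄ ∈ (ℂ²)^{⊗4}`, realized as a function on
`(Fin 2)⁴`. -/
def tprod4 (v1 v2 v3 v4 : Fin 2 → ℂ) : EuclideanSpace ℂ (Fin 2 × Fin 2 × Fin 2 × Fin 2) :=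
  WithLp.toLp 2 (fun x => v1 x.1 * v2 x.2.1 * v3 x.2.2.1 * v4 x.2.2.2)

/-- `β_a ⊗ β_b ∈ (ℂ²)^{⊗4}`, with `β_a` occupying tensor positions 1,2 and `β_b`
positions 3,4. -/
def bb (a b : Fin 2 × Fin 2 → ℂ) : EuclideanSpace ℂ (Fin 2 × Fin 2 × Fin 2 × Fin 2) :=
  WithLp.toLp 2 (fun x => a (x.1, x.2.1) * b (x.2.2.1, x.2.2.2))

/-! The pairing of `v₁ ⊗ v₂ ⊗ v₃ ⊗ v₄` with `β_a ⊗ β_b` factors into a pairing of `v₁ ⊗ v₂`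
with `β_a` times one of `v₃ ⊗ v₄` with `β_b`. Pairing `u ⊗ v̄` with `β₁` gives the Hermitian
product `⟨u, v⟩`, and pairing `u ⊗ v` with `β₂` gives the conjugate of `det [u; v]`. If all four
products vanish, then for one of the pairs `(ψ₁, ψ₂)`, `(ψ₃, ψ₄)` both factors vanish, so its two
vectors are orthogonal and parallel, which is impossible unless one of them is zero. -/

open Matrix
open scoped ComplexOrder

theorem eq_zero_or_eq_zero_of_dotProduct_eq_zero_of_det_eq_zero {R : Type*} [CommRing R]
    [PartialOrder R] [StarRing R] [StarOrderedRing R] [NoZeroDivisors R] {u v : Fin 2 → R}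
    (horth : star u ⬝ᵥ v = 0) (hdet : (of ![u, v]).det = 0) : u = 0 ∨ v = 0 := by
  refine or_iff_not_imp_left.2 fun hu => ?_
  have hnorm : star u ⬝ᵥ u ≠ 0 := mt dotProduct_star_self_eq_zero.1 hu
  simp only [dotProduct, Fin.sum_univ_two, Pi.star_apply] at horth hnorm
  simp only [det_fin_two, of_apply, cons_val_zero, cons_val_one, cons_val_fin_one] at hdet
  refine funext <| Fin.forall_fin_two.2 ⟨(mul_eq_zero.1 ?_).resolve_left hnorm,
    (mul_eq_zero.1 ?_).resolve_left hnorm⟩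
  · linear_combination u 0 * horth - star (u 1) * hdet
  · linear_combination u 1 * horth + star (u 0) * hdet

def tprod2 (v w : Fin 2 → ℂ) : EuclideanSpace ℂ (Fin 2 × Fin 2) :=
  WithLp.toLp 2 (fun x => v x.1 * w x.2)

theorem inner_tprod4_bb (v1 v2 v3 v4 : Fin 2 → ℂ) (a b : Fin 2 × Fin 2 → ℂ) :
    inner ℂ (tprod4 v1 v2 v3 v4) (bb a b) =
      inner ℂ (tprod2 v1 v2) (WithLp.toLp 2 a) * inner ℂ (tprod2 v3 v4) (WithLp.toLp 2 b) := by
  simp only [PiLp.inner_apply, tprod4, tprod2, bb, RCLike.inner_apply, Fintype.sum_prod_type,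
    Finset.sum_mul_sum, map_mul]
  refine Finset.sum_congr rfl fun _ _ => ?_
  rw [Finset.sum_comm]
  exact Finset.sum_congr rfl fun _ _ => Finset.sum_congr rfl fun _ _ =>
    Finset.sum_congr rfl fun _ _ => by ring

theorem inner_tprod2_conj2_beta1 (u v : Fin 2 → ℂ) :
    inner ℂ (tprod2 u (conj2 v)) (WithLp.toLp 2 beta1) = star u ⬝ᵥ v := by
  simp [PiLp.inner_apply, tprod2, conj2, beta1, e0, e1, dotProduct, Fintype.sum_prod_type,
    Fin.sum_univ_two]

theorem inner_tprod2_beta2 (u v : Fin 2 → ℂ) :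
    inner ℂ (tprod2 u v) (WithLp.toLp 2 beta2) = star (of ![u, v]).det := by
  simp only [PiLp.inner_apply, tprod2, beta2, e0, e1, RCLike.inner_apply, Fintype.sum_prod_type,
    Fin.sum_univ_two, Fin.isValue, ↓reduceIte, zero_ne_one, one_ne_zero, det_fin_two, of_apply,
    cons_val_zero, cons_val_one, cons_val_fin_one, star_sub, star_mul', RCLike.star_def, map_mul]
  ring

theorem inner_beta1_ne_zero_or_inner_beta2_ne_zero {u v : Fin 2 → ℂ} (hu : u ≠ 0) (hv : v ≠ 0) :
    inner ℂ (tprod2 u (conj2 v)) (WithLp.toLp 2 beta1) ≠ 0 ∨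
      inner ℂ (tprod2 u v) (WithLp.toLp 2 beta2) ≠ 0 := by
  rw [inner_tprod2_conj2_beta1, inner_tprod2_beta2, star_ne_zero, ← not_and_or]
  rintro ⟨horth, hdet⟩
  exact (eq_zero_or_eq_zero_of_dotProduct_eq_zero_of_det_eq_zero horth hdet).elim hu hv

/-- Four qubit example with the same number of equations and unknowns but no nonzero
solution: there exist no nonzero `ψ₁, ψ₂, ψ₃, ψ₄ ∈ ℂ²` with
`ψ₁ ⊗ ψ̄₂ ⊗ ψ₃ ⊗ ψ̄₄ ⊥ β₁⊗β₁`, `ψ₁ ⊗ ψ̄₂ ⊗ ψ₃ ⊗ ψ₄ ⊥ β₁⊗β₂`,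
`ψ₁ ⊗ ψ₂ ⊗ ψ₃ ⊗ ψ̄₄ ⊥ β₂⊗β₁` and `ψ₁ ⊗ ψ₂ ⊗ ψ₃ ⊗ ψ₄ ⊥ β₂⊗β₂`. -/
theorem four_qubit_no_solution :
    ¬ ∃ ψ1 ψ2 ψ3 ψ4 : Fin 2 → ℂ, ψ1 ≠ 0 ∧ ψ2 ≠ 0 ∧ ψ3 ≠ 0 ∧ ψ4 ≠ 0 ∧
      (inner ℂ (tprod4 ψ1 (conj2 ψ2) ψ3 (conj2 ψ4)) (bb beta1 beta1) : ℂ) = 0 ∧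
      (inner ℂ (tprod4 ψ1 (conj2 ψ2) ψ3 ψ4) (bb beta1 beta2) : ℂ) = 0 ∧
      (inner ℂ (tprod4 ψ1 ψ2 ψ3 (conj2 ψ4)) (bb beta2 beta1) : ℂ) = 0 ∧
      (inner ℂ (tprod4 ψ1 ψ2 ψ3 ψ4) (bb beta2 beta2) : ℂ) = 0 := by
  rintro ⟨ψ1, ψ2, ψ3, ψ4, h1, h2, h3, h4, h11, h12, h21, h22⟩
  simp only [inner_tprod4_bb] at h11 h12 h21 h22
  rcases inner_beta1_ne_zero_or_inner_beta2_ne_zero h1 h2 with hA | hB <;>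
    rcases inner_beta1_ne_zero_or_inner_beta2_ne_zero h3 h4 with hC | hD
  · exact mul_ne_zero hA hC h11
  · exact mul_ne_zero hA hD h12
  · exact mul_ne_zero hB hC h21
  · exact mul_ne_zero hB hD h22
end
end

section
/- Let n = 2m+1 ≥ 3 be an odd integer and let Σ be an n×n matrix with all entries equal to +1 or −1. If μ(Σ) ≥ mn − (m−1), then there exists a matrix Σ′ equivalent to Σ with μ(Σ′) < μ(Σ). -/
noncomputable section

open scoped BigOperators

/-- `μ(M)`: the number of entries of `M` equal to `-1`. -/
def mu {n : ℕ} (M : Matrix (Fin n) (Fin n) ℤ) : ℕ :=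
  (Finset.univ.filter fun p : Fin n × Fin n => M p.1 p.2 = -1).card

/-- Two `n × n` matrices with entries `±1` are equivalent if one is obtained from the other
by permuting rows and columns and negating rows and columns: `B i j = ε i * δ j * A (π i) (τ j)`
for permutations `π, τ` and signs `ε, δ`. -/
def MatEquiv {n : ℕ} (A B : Matrix (Fin n) (Fin n) ℤ) : Prop :=
  ∃ (π τ : Equiv.Perm (Fin n)) (ε δ : Fin n → ℤ),
    (∀ i, ε i = 1 ∨ ε i = -1) ∧ (∀ j, δ j = 1 ∨ δ j = -1) ∧
      ∀ i j, B i j = ε i * δ j * A (π i) (τ j)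

/-!
Negating a row or column with `k` entries `-1` changes `μ` by `n - 2k`, so it lowers `μ` when
`k > m`. Otherwise
every line has at most `m` entries `-1`, and the bound on `μ(M)` leaves fewer than `m` rows and
fewer than `m` columns with strictly fewer than `m`. So some row `i` has exactly `m` entries `-1`,
and among the `m + 1` columns where row `i` is `+1` two, `j₁` and `j₂`, have exactly `m` entries
`-1`. Negating row `i` raises `μ` by `n - 2m = 1` and turns columns `j₁, j₂` into columns with
`m + 1` entries `-1`; negating each of them then lowers `μ` by `1`, for a net decrease of `1`.
-/

open Finset Matrix

section NegCount

variable {ι : Type*} [Fintype ι]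

def negCount (v : ι → ℤ) : ℕ := #{i | v i = -1}

lemma negCount_eq_sum (v : ι → ℤ) : negCount v = ∑ i, if v i = -1 then 1 else 0 :=
  card_filter _ _

lemma sum_comp_update_add {α M : Type*} [DecidableEq ι] [AddCommMonoid M] (g : α → M)
    (f : ι → α) (i : ι) (b : α) :
    ∑ x, g (Function.update f i b x) + g (f i) = ∑ x, g (f x) + g b := by
  simp only [Function.apply_update (fun _ => g), sum_update_of_mem (mem_univ i),
    sum_eq_add_sum_sdiff_singleton_of_mem (mem_univ i) (fun x => g (f x))]
  abel

lemma negCount_update [DecidableEq ι] (v : ι → ℤ) (i : ι) (a : ℤ) :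
    negCount (Function.update v i a) + (if v i = -1 then 1 else 0) =
      negCount v + (if a = -1 then 1 else 0) := by
  simp only [negCount_eq_sum]
  exact sum_comp_update_add (fun z : ℤ => if z = -1 then 1 else 0) v i a

lemma negCount_neg_add_negCount {v : ι → ℤ} (hv : ∀ i, v i = 1 ∨ v i = -1) :
    negCount (-v) + negCount v = Fintype.card ι := by
  rw [negCount_eq_sum, negCount_eq_sum, ← sum_add_distrib, Fintype.card_eq_sum_ones]
  refine sum_congr rfl fun i _ => ?_
  rcases hv i with h | h <;> simp [h]

lemma card_filter_lt_le_of_le_sum {g : ι → ℕ} {m : ℕ} (hg : ∀ x, g x ≤ m)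
    (hsum : m * Fintype.card ι - (m - 1) ≤ ∑ x, g x) : #{x | g x < m} ≤ m - 1 := by
  have : ∑ x, g x + #{x | g x < m} ≤ m * Fintype.card ι := by
    rw [card_filter, ← sum_add_distrib]
    calc ∑ x, (g x + if g x < m then 1 else 0) ≤ ∑ _x : ι, m :=
          sum_le_sum fun x _ => by have := hg x; split <;> omega
      _ = m * Fintype.card ι := by simp [mul_comm]
  omega

end NegCount

section SignChanges

variable {n : ℕ}

lemma mu_eq_sum_negCount (M : Matrix (Fin n) (Fin n) ℤ) : mu M = ∑ i, negCount (M i) := by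
  simp only [mu, card_filter, Fintype.sum_prod_type, negCount_eq_sum]

lemma mu_transpose (M : Matrix (Fin n) (Fin n) ℤ) : mu Mᵀ = mu M := by
  rw [mu_eq_sum_negCount, mu_eq_sum_negCount]
  simp only [negCount_eq_sum]
  exact sum_comm

lemma mu_updateRow (M : Matrix (Fin n) (Fin n) ℤ) (i : Fin n) (v : Fin n → ℤ) :
    mu (M.updateRow i v) + negCount (M i) = mu M + negCount v := by
  rw [mu_eq_sum_negCount, mu_eq_sum_negCount]
  exact sum_comp_update_add negCount M i v

def negRow (M : Matrix (Fin n) (Fin n) ℤ) (i : Fin n) : Matrix (Fin n) (Fin n) ℤ :=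
  M.updateRow i (-M i)

def negCol (M : Matrix (Fin n) (Fin n) ℤ) (j : Fin n) : Matrix (Fin n) (Fin n) ℤ :=
  M.updateCol j (-Mᵀ j)

lemma negCol_transpose (M : Matrix (Fin n) (Fin n) ℤ) (j : Fin n) :
    (negCol M j)ᵀ = negRow Mᵀ j :=
  updateRow_transpose.symm

variable {M : Matrix (Fin n) (Fin n) ℤ}

lemma mu_negRow (hM : ∀ i j, M i j = 1 ∨ M i j = -1) (i : Fin n) :
    mu (negRow M i) + 2 * negCount (M i) = mu M + n := by
  have := mu_updateRow M i (-M i)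
  have := negCount_neg_add_negCount (hM i)
  rw [Fintype.card_fin] at this
  rw [negRow]
  omega

lemma mu_negCol (hM : ∀ i j, M i j = 1 ∨ M i j = -1) (j : Fin n) :
    mu (negCol M j) + 2 * negCount (Mᵀ j) = mu M + n := by
  rw [← mu_transpose, negCol_transpose, ← mu_transpose M]
  exact mu_negRow (fun i j => hM j i) j

lemma negCount_col_negRow {i j : Fin n} (h : M i j = 1) :
    negCount ((negRow M i)ᵀ j) = negCount (Mᵀ j) + 1 := by
  have hcol : (negRow M i)ᵀ j = Function.update (Mᵀ j) i (-1) := by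
    ext k
    rw [transpose_apply, negRow, updateRow_apply, Function.update_apply]
    split_ifs with hk
    · rw [Pi.neg_apply, h]
    · rfl
  have := negCount_update (Mᵀ j) i (-1)
  rw [← hcol, transpose_apply, h] at this
  simpa using this

lemma col_negCol_of_ne {j j' : Fin n} (h : j' ≠ j) : (negCol M j)ᵀ j' = Mᵀ j' := by
  ext k
  exact updateCol_ne h

end SignChanges

section Equivalence

variable {n : ℕ} {A B C : Matrix (Fin n) (Fin n) ℤ}

lemma MatEquiv.trans (hAB : MatEquiv A B) (hBC : MatEquiv B C) : MatEquiv A C := by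
  obtain ⟨π, τ, ε, δ, hε, hδ, hB⟩ := hAB
  obtain ⟨π', τ', ε', δ', hε', hδ', hC⟩ := hBC
  refine ⟨π * π', τ * τ', fun i => ε' i * ε (π' i), fun j => δ' j * δ (τ' j), ?_, ?_, ?_⟩
  · intro i
    rcases hε' i with h | h <;> rcases hε (π' i) with h' | h' <;> simp [h, h']
  · intro j
    rcases hδ' j with h | h <;> rcases hδ (τ' j) with h' | h' <;> simp [h, h']
  · intro i j
    rw [hC, hB, Equiv.Perm.mul_apply, Equiv.Perm.mul_apply]
    ring

lemma MatEquiv.transpose (h : MatEquiv A B) : MatEquiv Aᵀ Bᵀ := by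
  obtain ⟨π, τ, ε, δ, hε, hδ, hB⟩ := h
  exact ⟨τ, π, δ, ε, hδ, hε, fun i j => by simp only [transpose_apply, hB]; ring⟩

lemma MatEquiv.sign_entries (h : MatEquiv A B) (hA : ∀ i j, A i j = 1 ∨ A i j = -1) :
    ∀ i j, B i j = 1 ∨ B i j = -1 := by
  obtain ⟨π, τ, ε, δ, hε, hδ, hB⟩ := h
  intro i j
  rw [hB]
  rcases hε i with h₁ | h₁ <;> rcases hδ j with h₂ | h₂ <;>
    rcases hA (π i) (τ j) with h₃ | h₃ <;> simp [h₁, h₂, h₃]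

lemma matEquiv_negRow (M : Matrix (Fin n) (Fin n) ℤ) (i : Fin n) :
    MatEquiv M (negRow M i) := by
  refine ⟨1, 1, fun k => if k = i then -1 else 1, 1, fun k => ?_, fun _ => Or.inl rfl,
    fun k j => ?_⟩
  · dsimp only
    split_ifs <;> simp
  · rw [negRow, updateRow_apply]
    split_ifs with hk <;> simp [hk]

lemma matEquiv_negCol (M : Matrix (Fin n) (Fin n) ℤ) (j : Fin n) :
    MatEquiv M (negCol M j) := by
  have := (matEquiv_negRow Mᵀ j).transpose
  rwa [← negCol_transpose, transpose_transpose, transpose_transpose] at this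

end Equivalence

section Reduction

variable {n : ℕ} {M : Matrix (Fin n) (Fin n) ℤ}

lemma mu_negCol_negCol_negRow (hM : ∀ i j, M i j = 1 ∨ M i j = -1) {i j₁ j₂ : Fin n}
    (hj : j₁ ≠ j₂) (h₁ : M i j₁ = 1) (h₂ : M i j₂ = 1) :
    mu (negCol (negCol (negRow M i) j₁) j₂) +
        2 * (negCount (M i) + negCount (Mᵀ j₁) + negCount (Mᵀ j₂)) + 4 = mu M + 3 * n := by
  have hM₁ := (matEquiv_negRow M i).sign_entries hM
  have hM₂ := (matEquiv_negCol _ j₁).sign_entries hM₁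
  have e₁ := mu_negRow hM i
  have e₂ := mu_negCol hM₁ j₁
  have e₃ := mu_negCol hM₂ j₂
  have c₁ := negCount_col_negRow h₁
  have c₂ := negCount_col_negRow h₂
  rw [col_negCol_of_ne hj.symm] at e₃
  omega

lemma exists_row_negCount_eq {m : ℕ} (hn : n = 2 * m + 1) (hrow : ∀ i, negCount (M i) ≤ m)
    (hmu : m * n - (m - 1) ≤ mu M) : ∃ i, negCount (M i) = m := by
  have hsmall :=
    card_filter_lt_le_of_le_sum hrow (by rwa [Fintype.card_fin, ← mu_eq_sum_negCount])
  obtain ⟨i, -, hi⟩ := exists_mem_notMem_of_card_lt_card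
    (s := {i | negCount (M i) < m}) (t := univ) (by rw [card_univ, Fintype.card_fin]; omega)
  have := hrow i
  simp only [mem_filter, mem_univ, true_and, not_lt] at hi
  exact ⟨i, by omega⟩

lemma exists_two_cols_negCount_eq {m : ℕ} (hn : n = 2 * m + 1) (hm : 1 ≤ m)
    (hM : ∀ i j, M i j = 1 ∨ M i j = -1) (hcol : ∀ j, negCount (Mᵀ j) ≤ m)
    (hmu : m * n - (m - 1) ≤ mu M) {i : Fin n} (hi : negCount (M i) = m) :
    ∃ j₁ j₂, j₁ ≠ j₂ ∧ M i j₁ = 1 ∧ M i j₂ = 1 ∧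
      negCount (Mᵀ j₁) = m ∧ negCount (Mᵀ j₂) = m := by
  set P : Finset (Fin n) := {j | M i j = 1}
  set S : Finset (Fin n) := {j | negCount (Mᵀ j) < m}
  have hS : #S ≤ m - 1 :=
    card_filter_lt_le_of_le_sum hcol
      (by rwa [Fintype.card_fin, ← mu_eq_sum_negCount, mu_transpose])
  have hP : #P = m + 1 := by
    have hneg : negCount (-M i) = #P := by simp only [negCount, P, Pi.neg_apply, neg_inj]
    have := negCount_neg_add_negCount (hM i)
    rw [hneg, Fintype.card_fin] at this
    omega
  have htwo : 1 < #(P \ S) := by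
    have := le_card_sdiff S P
    omega
  obtain ⟨j₁, hj₁, j₂, hj₂, hne⟩ := one_lt_card.mp htwo
  simp only [P, S, mem_sdiff, mem_filter, mem_univ, true_and, not_lt] at hj₁ hj₂
  exact ⟨j₁, j₂, hne, hj₁.1, hj₂.1, (hcol j₁).antisymm hj₁.2, (hcol j₂).antisymm hj₂.2⟩

end Reduction

/-- Odd case of sign reduction: if `n = 2m + 1 ≥ 3` and `M` is an `n × n` `(±1)`-matrix with
`μ(M) ≥ mn - (m - 1)`, then `M` is equivalent to a matrix `M'` with `μ(M') < μ(M)`. -/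
theorem mu_reduction_odd {m n : ℕ} (hn : n = 2 * m + 1) (hn3 : 3 ≤ n)
    (M : Matrix (Fin n) (Fin n) ℤ) (hM : ∀ i j, M i j = 1 ∨ M i j = -1)
    (hmu : m * n - (m - 1) ≤ mu M) :
    ∃ M' : Matrix (Fin n) (Fin n) ℤ, MatEquiv M M' ∧ mu M' < mu M := by
  by_cases hrow : ∃ i, m < negCount (M i)
  · obtain ⟨i, hi⟩ := hrow
    have := mu_negRow hM i
    exact ⟨_, matEquiv_negRow M i, by omega⟩
  by_cases hcol : ∃ j, m < negCount (Mᵀ j)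
  · obtain ⟨j, hj⟩ := hcol
    have := mu_negCol hM j
    exact ⟨_, matEquiv_negCol M j, by omega⟩
  push Not at hrow hcol
  obtain ⟨i, hi⟩ := exists_row_negCount_eq hn hrow hmu
  obtain ⟨j₁, j₂, hne, h₁, h₂, hc₁, hc₂⟩ :=
    exists_two_cols_negCount_eq hn (by omega) hM hcol hmu hi
  have := mu_negCol_negCol_negRow hM hne h₁ h₂
  exact ⟨_, ((matEquiv_negRow M i).trans (matEquiv_negCol _ j₁)).trans (matEquiv_negCol _ j₂),
    by omega⟩
end
end

section
/- Let n = 2m ≥ 4 be an even integer and let Σ be an n×n matrix with all entries equal to +1 or −1. If μ(Σ) ≥ mn − m, then there exists a matrix Σ′ equivalent to Σ with μ(Σ′) < μ(Σ). -/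
noncomputable section

open scoped BigOperators

/-!
Write `s` for the sum of the entries, `r i` and `c j` for the row and column sums, so that
`μ = (n² - s) / 2` and the hypothesis reads `s ≤ n`. Negating the rows in `A` and the columns in `B`
turns `s` into `s - 2 ∑_{A} r - 2 ∑_{B} c + 4 ∑_{A × B} Σ`, and it suffices to make this larger
than `s`. If no such move helps, then (negating one line) all `r i, c j ≥ 0`, and (negating one row and
one column) `Σ i j = -1` whenever `r i = c j = 0`. The line sums are even, so at least `m` rows `R₀`
and `m` columns `C₀` have sum zero. Negating `R₀` together with the columns outside `C₀` then
gives `4 |R₀| |C₀| - s ≥ 4m² - s > s`.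
-/

open Finset

section FlipLines

variable {ι κ : Type*} [DecidableEq ι] [DecidableEq κ]

def flipSign (A : Finset ι) (i : ι) : ℤ := if i ∈ A then -1 else 1

lemma flipSign_eq_one_or_neg_one (A : Finset ι) (i : ι) :
    flipSign A i = 1 ∨ flipSign A i = -1 := by
  unfold flipSign
  split_ifs <;> simp

def flipLines (A : Finset ι) (B : Finset κ) (M : Matrix ι κ ℤ) : Matrix ι κ ℤ :=
  Matrix.of fun i j => flipSign A i * flipSign B j * M i j

lemma flipLines_eq_one_or_neg_one {M : Matrix ι κ ℤ} (hM : ∀ i j, M i j = 1 ∨ M i j = -1)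
    (A : Finset ι) (B : Finset κ) (i : ι) (j : κ) :
    flipLines A B M i j = 1 ∨ flipLines A B M i j = -1 := by
  rcases flipSign_eq_one_or_neg_one A i with h₁ | h₁ <;>
  rcases flipSign_eq_one_or_neg_one B j with h₂ | h₂ <;>
  rcases hM i j with h₃ | h₃ <;> simp [flipLines, h₁, h₂, h₃]

lemma sum_flipLines [Fintype ι] [Fintype κ] (A : Finset ι) (B : Finset κ) (M : Matrix ι κ ℤ) :
    ∑ i, ∑ j, flipLines A B M i j = ∑ i, ∑ j, M i j - 2 * ∑ i ∈ A, ∑ j, M i j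
      - 2 * ∑ j ∈ B, ∑ i, M i j + 4 * ∑ i ∈ A, ∑ j ∈ B, M i j := by
  set a : ι → ℤ := fun i => if i ∈ A then 1 else 0
  set b : κ → ℤ := fun j => if j ∈ B then 1 else 0
  have hentry : ∀ i j, flipLines A B M i j =
      M i j - 2 * (a i * M i j) - 2 * (b j * M i j) + 4 * (a i * (b j * M i j)) := by
    intro i j
    simp only [flipLines, flipSign, Matrix.of_apply, a, b]
    split_ifs <;> ring
  have hcol : ∑ i, ∑ j, b j * M i j = ∑ j ∈ B, ∑ i, M i j := by
    rw [sum_comm]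
    simp only [← mul_sum]
    simp only [b, boole_mul, Fintype.sum_ite_mem]
  simp only [hentry, sum_add_distrib, sum_sub_distrib, ← mul_sum, hcol]
  simp only [a, b, boole_mul, Fintype.sum_ite_mem]

end FlipLines

lemma even_sum_of_eq_one_or_neg_one {α : Type*} [Fintype α] {f : α → ℤ}
    (hf : ∀ x, f x = 1 ∨ f x = -1) (hcard : Even (Fintype.card α)) : Even (∑ x, f x) := by
  have h : Even (∑ x, (f x + 1)) := even_sum _ fun x _ => by rcases hf x with h | h <;> simp [h]
  rw [sum_add_distrib] at h
  simp only [sum_const, card_univ, nsmul_eq_mul, mul_one] at h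
  exact (Int.even_add.mp h).mpr (by exact_mod_cast hcard)

lemma le_card_filter_eq_zero {α : Type*} [Fintype α] {m : ℕ} (hcard : Fintype.card α = 2 * m)
    {f : α → ℤ} (hf : ∀ x, 0 ≤ f x) (heven : ∀ x, Even (f x)) (hsum : ∑ x, f x ≤ 2 * m) :
    m ≤ #{x | f x = 0} := by
  have htwo : ∀ x ∈ ({x | f x ≠ 0} : Finset α), 2 ≤ f x := by
    intro x hx
    obtain ⟨k, hk⟩ := heven x
    have hx0 := hf x
    have hx1 := (mem_filter.mp hx).2
    omega
  have hlow : #{x | f x ≠ 0} • (2 : ℤ) ≤ ∑ x, f x := by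
    rw [← sum_filter_ne_zero]
    exact card_nsmul_le_sum _ _ _ htwo
  have hsplit : #{x | f x = 0} + #{x | f x ≠ 0} = 2 * m := by
    rw [← hcard, ← card_univ]
    exact card_filter_add_card_filter_not _
  rw [nsmul_eq_mul] at hlow
  omega

section Mu

variable {n : ℕ}

lemma sum_eq_sq_sub_two_mul_mu {M : Matrix (Fin n) (Fin n) ℤ}
    (hM : ∀ i j, M i j = 1 ∨ M i j = -1) :
    ∑ i, ∑ j, M i j = (n : ℤ) ^ 2 - 2 * mu M := by
  have hmu : (mu M : ℤ) = ∑ i, ∑ j, if M i j = -1 then 1 else 0 := by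
    rw [mu, card_filter, ← Fintype.sum_prod_type']
    push_cast
    rfl
  have hentry : ∀ i j, M i j = 1 - 2 * if M i j = -1 then 1 else 0 := by
    intro i j
    rcases hM i j with h | h <;> simp [h]
  rw [hmu, mul_sum]
  simp_rw [mul_sum]
  conv_lhs => enter [2, i, 2, j]; rw [hentry i j]
  simp [sum_sub_distrib, sq]

lemma mu_lt_of_sum_lt {M M' : Matrix (Fin n) (Fin n) ℤ} (hM : ∀ i j, M i j = 1 ∨ M i j = -1)
    (hM' : ∀ i j, M' i j = 1 ∨ M' i j = -1) (h : ∑ i, ∑ j, M i j < ∑ i, ∑ j, M' i j) :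
    mu M' < mu M := by
  rw [sum_eq_sq_sub_two_mul_mu hM, sum_eq_sq_sub_two_mul_mu hM'] at h
  omega

lemma matEquiv_flipLines (A B : Finset (Fin n)) (M : Matrix (Fin n) (Fin n) ℤ) :
    MatEquiv M (flipLines A B M) :=
  ⟨1, 1, flipSign A, flipSign B, flipSign_eq_one_or_neg_one A, flipSign_eq_one_or_neg_one B,
    fun _ _ => rfl⟩

end Mu

lemma exists_sum_lt_sum_flipLines {ι κ : Type*} [Fintype ι] [Fintype κ] [DecidableEq ι]
    [DecidableEq κ] {m : ℕ} (hm : 2 ≤ m) (hι : Fintype.card ι = 2 * m)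
    (hκ : Fintype.card κ = 2 * m) {M : Matrix ι κ ℤ} (hM : ∀ i j, M i j = 1 ∨ M i j = -1)
    (hS : ∑ i, ∑ j, M i j ≤ 2 * m) :
    ∃ A B, ∑ i, ∑ j, M i j < ∑ i, ∑ j, flipLines A B M i j := by
  by_contra! hopt
  simp only [sum_flipLines] at hopt
  have hrow : ∀ i, 0 ≤ ∑ j, M i j := fun i => by simpa using hopt {i} ∅
  have hcol : ∀ j, 0 ≤ ∑ i, M i j := fun j => by simpa using hopt ∅ {j}
  have hcross : ∀ i j, ∑ j', M i j' = 0 → ∑ i', M i' j = 0 → M i j = -1 := by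
    intro i j hi hj
    have := hopt {i} {j}
    simp only [sum_singleton, hi, hj] at this
    exact (hM i j).resolve_left (by omega)
  have hS' : ∑ j, ∑ i, M i j ≤ 2 * m := sum_comm (f := fun i j => M i j) ▸ hS
  have hR₀ : m ≤ #{i | ∑ j, M i j = 0} := le_card_filter_eq_zero hι hrow
    (fun i => even_sum_of_eq_one_or_neg_one (hM i) (hκ ▸ even_two_mul m)) hS
  have hC₀ : m ≤ #{j | ∑ i, M i j = 0} := le_card_filter_eq_zero hκ hcol
    (fun j => even_sum_of_eq_one_or_neg_one (hM · j) (hι ▸ even_two_mul m)) hS'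
  set R₀ : Finset ι := {i | ∑ j, M i j = 0}
  set C₀ : Finset κ := {j | ∑ i, M i j = 0}
  have hrowR₀ : ∀ i ∈ R₀, ∑ j ∈ {j | ∑ i, M i j ≠ 0}, M i j = #C₀ := by
    intro i hi
    have hsplit := sum_filter_add_sum_filter_not univ (fun j => ∑ i, M i j = 0) (M i)
    have hC₀ : ∑ j ∈ C₀, M i j = -#C₀ := by
      rw [sum_congr rfl fun j hj => hcross i j (mem_filter.mp hi).2 (mem_filter.mp hj).2,
        sum_const, nsmul_eq_mul, mul_neg_one]
    rw [hC₀, (mem_filter.mp hi).2] at hsplit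
    linarith
  have hmove := hopt R₀ {j | ∑ i, M i j ≠ 0}
  rw [sum_filter_ne_zero, sum_comm, sum_congr rfl hrowR₀,
    sum_eq_zero fun i hi => (mem_filter.mp hi).2, sum_const, nsmul_eq_mul] at hmove
  have hcard : (m : ℤ) * m ≤ #R₀ * #C₀ := by gcongr
  nlinarith

/-- Even case of sign reduction: if `n = 2m ≥ 4` and `M` is an `n × n` `(±1)`-matrix with
`μ(M) ≥ mn - m`, then `M` is equivalent to a matrix `M'` with `μ(M') < μ(M)`. -/
theorem mu_reduction_even {m n : ℕ} (hn : n = 2 * m) (hn4 : 4 ≤ n)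
    (M : Matrix (Fin n) (Fin n) ℤ) (hM : ∀ i j, M i j = 1 ∨ M i j = -1)
    (hmu : m * n - m ≤ mu M) :
    ∃ M' : Matrix (Fin n) (Fin n) ℤ, MatEquiv M M' ∧ mu M' < mu M := by
  subst hn
  have hS : ∑ i, ∑ j, M i j ≤ 2 * m := by
    have hm : m ≤ m * (2 * m) := Nat.le_mul_of_pos_right m (by omega)
    zify [hm] at hmu
    rw [sum_eq_sq_sub_two_mul_mu hM]
    push_cast
    nlinarith
  obtain ⟨A, B, hlt⟩ := exists_sum_lt_sum_flipLines (m := m) (by omega) (by simp) (by simp) hM hS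
  exact ⟨flipLines A B M, matEquiv_flipLines A B M,
    mu_lt_of_sum_lt hM (flipLines_eq_one_or_neg_one hM A B) hlt⟩
end
end

section
/- Let n = 2^k for some integer k ≥ 2, and let Σ be an n×n matrix with all entries equal to +1 or −1. If per(Σ) = 0, then μ(Σ), the number of entries of Σ equal to −1, is even. -/
noncomputable section

open scoped BigOperators

/-- The permanent of an `n × n` matrix. -/
def perm {n : ℕ} (M : Matrix (Fin n) (Fin n) ℤ) : ℤ :=
  ∑ l : Equiv.Perm (Fin n), ∏ i, M i (l i)

/-!
Write `M = J - 2E` with `E` the `0/1` indicator of the `-1` entries and expand the permanent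
over the rows `S` where the `E`-term is chosen: the `S`-term is `(-2)^|S|` times a sum over
permutations that only depends on `σ` on `S`, hence is divisible by `(n - |S|)!`. For `n = 2^k`,
Legendre's formula `v₂(m!) = m - s₂(m)` shows that every term with `|S| ≠ 1` is divisible by
`2^(n-k+1)`, while the singleton terms add up to `-2 (n-1)! μ` and `v₂(2 (n-1)!) = n - k`.
So `per(M) = 0` forces `μ` to be even.
-/

open scoped Nat

namespace Nat

lemma padicValNat_two_factorial (m : ℕ) : padicValNat 2 m ! = m - (digits 2 m).sum := by
  simpa using sub_one_mul_padicValNat_factorial (p := 2) m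

lemma digits_two_sum_le_of_lt_two_pow {k m : ℕ} (h : m < 2 ^ k) : (digits 2 m).sum ≤ k := by
  calc (digits 2 m).sum ≤ (digits 2 m).length • 1 :=
        List.sum_le_card_nsmul _ _ fun d hd => Nat.lt_succ_iff.mp (digits_lt_base one_lt_two hd)
    _ ≤ k := by simpa using (digits_length_le_iff one_lt_two m).mpr h

lemma digits_two_sum_lt_of_add_one_lt_two_pow {k m : ℕ} (h : m + 1 < 2 ^ k) :
    (digits 2 m).sum < k := by
  induction k generalizing m with
  | zero => simp at h
  | succ k ih =>
    rcases Nat.eq_zero_or_pos m with rfl | hm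
    · simp
    rw [digits_def' one_lt_two hm, List.sum_cons]
    rcases Nat.mod_two_eq_zero_or_one m with h0 | h1
    · have := digits_two_sum_le_of_lt_two_pow (k := k) (m := m / 2) (by omega)
      omega
    · have := ih (m := m / 2) (by omega)
      omega

lemma digits_two_sum_two_pow (k : ℕ) : (digits 2 (2 ^ k)).sum = 1 := by
  rw [← mul_one (2 ^ k), digits_base_pow_mul one_lt_two one_pos]
  simp

lemma padicValNat_two_factorial_two_pow_sub_one (k : ℕ) :
    padicValNat 2 (2 ^ k - 1)! = 2 ^ k - 1 - k := by
  have h := padicValNat_two_factorial (2 ^ k)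
  rw [digits_two_sum_two_pow, ← mul_factorial_pred (by positivity),
    padicValNat.mul (by positivity) (factorial_ne_zero _), padicValNat.prime_pow] at h
  omega

lemma two_pow_dvd_two_pow_mul_factorial_sub {k j : ℕ} (hk : 2 ≤ k) (hj : j ≤ 2 ^ k)
    (hj1 : j ≠ 1) : 2 ^ (2 ^ k - k + 1) ∣ 2 ^ j * (2 ^ k - j)! := by
  -- `v₂(2^j (2^k - j)!) = 2^k - s₂(2^k - j)`, and `s₂(2^k - j) < k` unless `j = 1`.
  have hdigits : (digits 2 (2 ^ k - j)).sum + 1 ≤ k := by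
    rcases Nat.eq_zero_or_pos j with rfl | hj0
    · rw [Nat.sub_zero, digits_two_sum_two_pow]; omega
    · exact digits_two_sum_lt_of_add_one_lt_two_pow (by omega)
  have hle := digit_sum_le 2 (2 ^ k - j)
  calc 2 ^ (2 ^ k - k + 1) ∣ 2 ^ (j + padicValNat 2 (2 ^ k - j)!) := by
        rw [padicValNat_two_factorial]
        refine pow_dvd_pow 2 ?_
        have := Nat.lt_two_pow_self (n := k)
        omega
    _ ∣ 2 ^ j * (2 ^ k - j)! := by
        rw [pow_add]
        exact mul_dvd_mul_left _ pow_padicValNat_dvd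

end Nat

open Nat in
lemma Int.even_of_two_pow_dvd_two_mul_factorial_mul {k : ℕ} {x : ℤ}
    (h : (2 : ℤ) ^ (2 ^ k - k + 1) ∣ 2 * ((2 ^ k - 1)! : ℕ) * x) : Even x := by
  obtain ⟨e, c, hc, hfac⟩ := exists_eq_two_pow_mul_odd (factorial_ne_zero (2 ^ k - 1))
  have he : e = 2 ^ k - 1 - k := by
    rw [← padicValNat_two_factorial_two_pow_sub_one, hfac,
      padicValNat.mul (by positivity) (by rintro rfl; simp at hc), padicValNat.prime_pow,
      padicValNat.eq_zero_of_not_dvd hc.not_two_dvd_nat, add_zero]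
  have hexp : 2 ^ k - k + 1 = (e + 1) + 1 := by
    have := Nat.lt_two_pow_self (n := k)
    omega
  have h2 : (2 : ℤ) ∣ c * x := by
    rw [hexp, pow_succ, hfac, show (2 : ℤ) * ((2 ^ e * c : ℕ) : ℤ) * x = 2 ^ (e + 1) * (c * x) by
      push_cast; ring] at h
    exact (mul_dvd_mul_iff_left (by positivity)).mp h
  rcases Int.prime_two.dvd_or_dvd h2 with hc2 | hx
  · exact absurd (Int.natCast_dvd_natCast.mp hc2) hc.not_two_dvd_nat
  · exact even_iff_two_dvd.mpr hx

open Finset Equiv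

namespace Equiv.Perm

variable {α : Type*} [Fintype α] [DecidableEq α]

theorem card_filter_eqOn (S : Finset α) (τ : Perm α) :
    #{σ : Perm α | ∀ i ∈ S, σ i = τ i} = (Fintype.card α - #S)! := by
  rw [← Fintype.card_subtype]
  let e : {σ : Perm α // ∀ i ∈ S, σ i = τ i} ≃ {π : Perm α // ∀ i, ¬i ∉ S → π i = i} :=
    { toFun σ := ⟨τ⁻¹ * σ, fun i hi => by simp [σ.2 i (not_not.mp hi)]⟩
      invFun π := ⟨τ * π, fun i hi => by simp [π.2 i (not_not.mpr hi)]⟩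
      left_inv σ := by ext; simp
      right_inv π := by ext; simp }
  rw [Fintype.card_congr (e.trans (Perm.subtypeEquivSubtypePerm _).symm), Fintype.card_perm,
    Fintype.card_subtype_compl, Fintype.card_coe]

theorem factorial_dvd_sum_of_eqOn {R : Type*} [CommSemiring R] (S : Finset α) (f : Perm α → R)
    (hf : ∀ σ τ : Perm α, (∀ i ∈ S, σ i = τ i) → f σ = f τ) :
    ((Fintype.card α - #S)! : R) ∣ ∑ σ, f σ := by
  let restrict (σ : Perm α) (i : S) : α := σ i
  rw [← sum_fiberwise_of_maps_to (g := restrict) (t := univ.image restrict)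
    fun σ _ => mem_image_of_mem _ (mem_univ σ)]
  refine dvd_sum fun b hb => ?_
  obtain ⟨τ, -, rfl⟩ := mem_image.mp hb
  have hfiber (σ : Perm α) : restrict σ = restrict τ ↔ ∀ i ∈ S, σ i = τ i := by
    simp [restrict, funext_iff]
  rw [sum_congr rfl fun σ hσ => hf σ τ ((hfiber σ).mp (mem_filter.mp hσ).2), sum_const,
    filter_congr fun σ _ => hfiber σ, card_filter_eqOn, nsmul_eq_mul]
  exact dvd_mul_right _ _

theorem sum_apply {M : Type*} [AddCommMonoid M] (i : α) (g : α → M) :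
    ∑ σ : Perm α, g (σ i) = (Fintype.card α - 1)! • ∑ j, g j := by
  rw [← sum_fiberwise univ (fun σ : Perm α => σ i), smul_sum]
  refine sum_congr rfl fun j _ => ?_
  rw [sum_congr rfl fun σ hσ => by rw [(mem_filter.mp hσ).2], sum_const]
  congr 1
  simpa [swap_apply_left] using card_filter_eqOn {i} (swap i j)

theorem sum_prod_one_add_mul {R : Type*} [CommSemiring R] (c : R) (E : α → α → R) :
    ∑ σ : Perm α, ∏ i, (1 + c * E i (σ i)) =
      ∑ S ∈ univ.powerset, c ^ #S * ∑ σ : Perm α, ∏ i ∈ S, E i (σ i) := by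
  simp_rw [prod_one_add, prod_mul_distrib, prod_const, mul_sum]
  exact sum_comm

theorem sum_prod_one_sub_two_mul_modEq {k : ℕ} (hk : 2 ≤ k) (hα : Fintype.card α = 2 ^ k)
    (E : α → α → ℤ) :
    ∑ σ : Perm α, ∏ i, (1 - 2 * E i (σ i)) ≡
      -2 * ((2 ^ k - 1)! : ℕ) * ∑ i, ∑ j, E i j [ZMOD 2 ^ (2 ^ k - k + 1)] := by
  set T : Finset α → ℤ := fun S => (-2) ^ #S * ∑ σ : Perm α, ∏ i ∈ S, E i (σ i)
  have hexpand : ∑ σ : Perm α, ∏ i, (1 - 2 * E i (σ i)) = ∑ S ∈ univ.powerset, T S := by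
    simpa [sub_eq_add_neg, neg_mul] using sum_prod_one_add_mul (-2) E
  have hsingletons :
      ∑ S ∈ univ.powersetCard 1, T S = -2 * ((2 ^ k - 1)! : ℕ) * ∑ i, ∑ j, E i j := by
    rw [powersetCard_one, sum_map, mul_sum]
    refine sum_congr rfl fun i _ => ?_
    simp only [T, Function.Embedding.coeFn_mk, card_singleton, pow_one, prod_singleton, sum_apply,
      hα, nsmul_eq_mul]
    ring
  have hrest : (2 : ℤ) ^ (2 ^ k - k + 1) ∣ ∑ S ∈ univ.powerset with #S ≠ 1, T S := by
    refine dvd_sum fun S hS => ?_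
    obtain ⟨q, hq⟩ := factorial_dvd_sum_of_eqOn S (fun σ => ∏ i ∈ S, E i (σ i))
      fun σ τ h => prod_congr rfl fun i hi => by rw [h i hi]
    have h := Nat.two_pow_dvd_two_pow_mul_factorial_sub hk (hα ▸ card_le_univ S)
      (mem_filter.mp hS).2
    have h' : (2 : ℤ) ^ (2 ^ k - k + 1) ∣ 2 ^ #S * ((2 ^ k - #S)! : ℕ) := by exact_mod_cast h
    change (2 : ℤ) ^ _ ∣ (-2) ^ #S * _
    rw [hq, hα, neg_pow, mul_assoc, ← mul_assoc (2 ^ #S)]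
    exact (h'.mul_right q).mul_left _
  rw [hexpand, ← sum_filter_add_sum_filter_not _ (fun S => #S = 1), ← powersetCard_eq_filter,
    hsingletons]
  exact (Int.modEq_iff_dvd.mpr (by rwa [add_sub_cancel_left])).symm

end Equiv.Perm

/-- If `n = 2^k` with `k ≥ 2` and `M` is an `n × n` `(±1)`-matrix with vanishing permanent,
then the number `μ(M)` of `-1` entries of `M` is even. -/
theorem mu_even_of_per_eq_zero {k n : ℕ} (hk : 2 ≤ k) (hn : n = 2 ^ k)
    (M : Matrix (Fin n) (Fin n) ℤ) (hM : ∀ i j, M i j = 1 ∨ M i j = -1)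
    (hper : perm M = 0) :
    Even (mu M) := by
  subst hn
  set E : Fin (2 ^ k) → Fin (2 ^ k) → ℤ := fun i j => if M i j = -1 then 1 else 0
  have hME (i j) : M i j = 1 - 2 * E i j := by rcases hM i j with h | h <;> simp [E, h]
  have hmu : ∑ i, ∑ j, E i j = mu M := by
    rw [mu, ← sum_boole, ← univ_product_univ, sum_product]
  have hcong := Equiv.Perm.sum_prod_one_sub_two_mul_modEq hk (Fintype.card_fin _) E
  simp_rw [← hME, hmu] at hcong
  rw [← perm, hper] at hcong
  exact (Int.even_coe_nat _).mp
    (Int.even_of_two_pow_dvd_two_mul_factorial_mul (by simpa using hcong.dvd))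
end
end

section
/- Let Σ_1 be the 4×5 matrix with rows (−1,+1,+1,−1,−1), (+1,−1,+1,+1,+1), (+1,+1,−1,+1,+1), (+1,+1,+1,+1,+1), and let Σ_2 be the 4×5 matrix with rows (−1,+1,+1,−1,+1), (+1,−1,+1,+1,−1), (+1,+1,−1,+1,+1), (+1,+1,+1,+1,+1). Then both Σ_1 and Σ_2 have rank 3 over ℚ; the polynomial ∏_{i=1}^{4} (Σ_1[i,1]α_1 + Σ_1[i,2]α_2 + ⋯ + Σ_1[i,5]α_5) belongs to the ideal of ℤ[α_1,…,α_5] generated by α_1², α_2², α_3², α_4², α_5², while the polynomial ∏_{i=1}^{4} (Σ_2[i,1]α_1 + ⋯ + Σ_2[i,5]α_5) does not belong to that ideal. -/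
/-!
In both matrices the fourth row is the sum of the first three, and the top-left `3 × 3` block
`!![-1, 1, 1; 1, -1, 1; 1, 1, -1]` has determinant `4`; hence both have rank `3`.

Modulo the squares `αⱼ²` a product of four linear forms reduces to its squarefree part, whose
coefficient at `α_S` (`|S| = 4`) is the permanent of the columns of `Σ` indexed by `S`. For `Σ₁`
all five permanents vanish, and the product is an explicit combination of the `αⱼ²`. For `Σ₂` the
permanent on the columns `{1, 2, 4, 5}` is `8`: the product is `8 α₁α₂α₄α₅` plus such a
combination, and no element of the ideal has a nonzero coefficient at a squarefree monomial.
-/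

open scoped BigOperators
open MvPolynomial

def Mat1 : Matrix (Fin 4) (Fin 5) ℤ :=
  !![-1, 1, 1, -1, -1; 1, -1, 1, 1, 1; 1, 1, -1, 1, 1; 1, 1, 1, 1, 1]

def Mat2 : Matrix (Fin 4) (Fin 5) ℤ :=
  !![-1, 1, 1, -1, 1; 1, -1, 1, 1, -1; 1, 1, -1, 1, 1; 1, 1, 1, 1, 1]

theorem Matrix.rank_eq_of_eq_mul_of_det_submatrix_ne_zero {K m n : Type*} [Field K] [Fintype n]
    {r : ℕ} {A : Matrix m n K} (B : Matrix m (Fin r) K) (C : Matrix (Fin r) n K) (hA : A = B * C)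
    (e : Fin r → m) (f : Fin r → n) (hdet : (A.submatrix e f).det ≠ 0) : A.rank = r := by
  refine le_antisymm ?_ ?_
  · rw [hA]
    simpa using (rank_mul_le_right B C).trans C.rank_le_card_height
  · calc r = (A.submatrix e f).rank := by
          rw [rank_of_isUnit _ ((isUnit_iff_isUnit_det _).2 hdet.isUnit), Fintype.card_fin]
      _ ≤ A.rank := rank_submatrix_le A e f

namespace MvPolynomial

variable {σ R : Type*}

theorem coeff_eq_zero_of_mem_span_X_sq [CommSemiring R] {p : MvPolynomial σ R}
    (hp : p ∈ Ideal.span (Set.range fun j : σ => (X j : MvPolynomial σ R) ^ 2))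
    {m : σ →₀ ℕ} (hm : ∀ j, m j ≤ 1) : coeff m p = 0 := by
  have hspan : Set.range (fun j : σ => (X j : MvPolynomial σ R) ^ 2) =
      (fun s => monomial s (1 : R)) '' Set.range fun j => Finsupp.single j 2 := by
    rw [← Set.range_comp]
    simp only [Function.comp_def, X_pow_eq_monomial]
  rw [hspan, mem_ideal_span_monomial_image] at hp
  by_contra hne
  obtain ⟨_, ⟨j, rfl⟩, hjm⟩ := hp m (mem_support_iff.2 hne)
  have h2 : 2 ≤ m j := by simpa using hjm j
  exact absurd (hm j) (by omega)

theorem notMem_span_X_sq_of_sub_mem [CommRing R] {p q : MvPolynomial σ R}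
    (hpq : p - q ∈ Ideal.span (Set.range fun j : σ => (X j : MvPolynomial σ R) ^ 2))
    {m : σ →₀ ℕ} (hm : ∀ j, m j ≤ 1) (hq : coeff m q ≠ 0) :
    p ∉ Ideal.span (Set.range fun j : σ => (X j : MvPolynomial σ R) ^ 2) := fun hp =>
  hq (by simpa using coeff_eq_zero_of_mem_span_X_sq (sub_mem hp hpq) hm)

end MvPolynomial

theorem Mat1_map_rank : (Mat1.map (Int.cast : ℤ → ℚ)).rank = 3 := by
  refine Matrix.rank_eq_of_eq_mul_of_det_submatrix_ne_zero
    !![1, 0, 0; 0, 1, 0; 0, 0, 1; 1, 1, 1] !![-1, 1, 1, -1, -1; 1, -1, 1, 1, 1; 1, 1, -1, 1, 1]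
    ?_ ![0, 1, 2] ![0, 1, 2] ?_
  · ext i j
    fin_cases i <;> fin_cases j <;> simp [Mat1, Matrix.mul_apply, Fin.sum_univ_three]
  · rw [Matrix.det_fin_three]
    simp [Mat1, Matrix.cons_val_zero, Matrix.cons_val_one, Matrix.cons_val_two]
    norm_num

theorem Mat2_map_rank : (Mat2.map (Int.cast : ℤ → ℚ)).rank = 3 := by
  refine Matrix.rank_eq_of_eq_mul_of_det_submatrix_ne_zero
    !![1, 0, 0; 0, 1, 0; 0, 0, 1; 1, 1, 1] !![-1, 1, 1, -1, 1; 1, -1, 1, 1, -1; 1, 1, -1, 1, 1]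
    ?_ ![0, 1, 2] ![0, 1, 2] ?_
  · ext i j
    fin_cases i <;> fin_cases j <;> simp [Mat2, Matrix.mul_apply, Fin.sum_univ_three]
  · rw [Matrix.det_fin_three]
    simp [Mat2, Matrix.cons_val_zero, Matrix.cons_val_one, Matrix.cons_val_two]
    norm_num

theorem prod_Mat1_mem_span_X_sq :
    (∏ i : Fin 4, (∑ j : Fin 5, C (Mat1 i j) * X j) : MvPolynomial (Fin 5) ℤ)
      ∈ Ideal.span (Set.range fun j : Fin 5 => (X j : MvPolynomial (Fin 5) ℤ) ^ 2) := by
  refine Ideal.mem_span_range_iff_exists_fun.2 ⟨![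
      -X 0 ^ 2 - 4 * X 0 * X 3 - 4 * X 0 * X 4 + 2 * X 1 ^ 2 + 2 * X 2 ^ 2 - 6 * X 3 ^ 2
        - 12 * X 3 * X 4 - 6 * X 4 ^ 2,
      4 * X 0 * X 3 + 4 * X 0 * X 4 - X 1 ^ 2 + 2 * X 2 ^ 2 + 2 * X 3 ^ 2 + 4 * X 3 * X 4
        + 2 * X 4 ^ 2,
      4 * X 0 * X 3 + 4 * X 0 * X 4 - X 2 ^ 2 + 2 * X 3 ^ 2 + 4 * X 3 * X 4 + 2 * X 4 ^ 2,
      -4 * X 0 * X 3 - 12 * X 0 * X 4 - X 3 ^ 2 - 4 * X 3 * X 4 - 6 * X 4 ^ 2,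
      -12 * X 0 * X 3 - 4 * X 0 * X 4 - 4 * X 3 * X 4 - X 4 ^ 2], ?_⟩
  simp [Fin.sum_univ_five, Fin.prod_univ_four, Mat1]
  ring

theorem prod_Mat2_notMem_span_X_sq :
    (∏ i : Fin 4, (∑ j : Fin 5, C (Mat2 i j) * X j) : MvPolynomial (Fin 5) ℤ)
      ∉ Ideal.span (Set.range fun j : Fin 5 => (X j : MvPolynomial (Fin 5) ℤ) ^ 2) := by
  let m : Fin 5 →₀ ℕ :=
    Finsupp.single 0 1 + Finsupp.single 1 1 + Finsupp.single 3 1 + Finsupp.single 4 1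
  refine notMem_span_X_sq_of_sub_mem (q := monomial m 8) ?_ (m := m) ?_ (by simp)
  · refine Ideal.mem_span_range_iff_exists_fun.2 ⟨![
        -X 0 ^ 2 - 4 * X 0 * X 3 + 2 * X 1 ^ 2 + 4 * X 1 * X 4 + 2 * X 2 ^ 2 - 6 * X 3 ^ 2
          + 2 * X 4 ^ 2,
        4 * X 0 * X 3 - X 1 ^ 2 - 4 * X 1 * X 4 + 2 * X 2 ^ 2 + 2 * X 3 ^ 2 - 6 * X 4 ^ 2,
        4 * X 0 * X 3 + 4 * X 1 * X 4 - X 2 ^ 2 + 2 * X 3 ^ 2 + 2 * X 4 ^ 2,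
        -4 * X 0 * X 3 + 4 * X 1 * X 4 - X 3 ^ 2 + 2 * X 4 ^ 2,
        4 * X 0 * X 3 - 4 * X 1 * X 4 - X 4 ^ 2], ?_⟩
    simp [m, Fin.sum_univ_five, Fin.prod_univ_four, Mat2, monomial_add_single,
      ← C_mul_X_pow_eq_monomial]
    ring
  · intro j
    fin_cases j <;> simp [m]

/-- The two `4 × 5` sign matrices `Σ₁` and `Σ₂` both have rank `3` over `ℚ`; the polynomial
`∏ᵢ (Σ₁[i,1]α₁ + ⋯ + Σ₁[i,5]α₅)` lies in the ideal `(α₁², …, α₅²)` of `ℤ[α₁,…,α₅]`, while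
`∏ᵢ (Σ₂[i,1]α₁ + ⋯ + Σ₂[i,5]α₅)` does not. Hence the converse of the rank criterion fails. -/
theorem five_qubit_rank_three_examples :
    (Mat1.map (Int.cast : ℤ → ℚ)).rank = 3 ∧
    (Mat2.map (Int.cast : ℤ → ℚ)).rank = 3 ∧
    (∏ i : Fin 4, (∑ j : Fin 5, C (Mat1 i j) * X j) : MvPolynomial (Fin 5) ℤ)
      ∈ Ideal.span (Set.range fun j : Fin 5 => (X j : MvPolynomial (Fin 5) ℤ) ^ 2) ∧
    (∏ i : Fin 4, (∑ j : Fin 5, C (Mat2 i j) * X j) : MvPolynomial (Fin 5) ℤ)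
      ∉ Ideal.span (Set.range fun j : Fin 5 => (X j : MvPolynomial (Fin 5) ℤ) ^ 2) :=
  ⟨Mat1_map_rank, Mat2_map_rank, prod_Mat1_mem_span_X_sq, prod_Mat2_notMem_span_X_sq⟩
end
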